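/- The matrices R = [[1,1],[0,1]] and L = [[1,0],[1,1]] generate a free submonoid of SL(2,ℤ): two words in the letters R and L that are equal as matrices must be equal as words. -/
import Mathlib


/-- The matrix R = [[1,1];[0,1]]. -/
def Rm : Matrix (Fin 2) (Fin 2) ℤ := !![1, 1; 0, 1]

/-- The matrix L = [[1,0];[1,1]]. -/
def Lm : Matrix (Fin 2) (Fin 2) ℤ := !![1, 0; 1, 1]

/-- Evaluate a word in the letters R (`true`) and L (`false`) as a matrix product,
in the given order. -/
def wordEval (w : List Bool) : Matrix (Fin 2) (Fin 2) ℤ :=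
  (w.map fun b => if b then Rm else Lm).prod

lemma wordEval_nil : wordEval [] = 1 := rfl

lemma wordEval_cons (b : Bool) (w : List Bool) :
    wordEval (b :: w) = (if b then Rm else Lm) * wordEval w := by
  simp [wordEval]

/-- Row sums of a word evaluation are at least 1. -/
lemma rowsum_pos (w : List Bool) : ∀ i : Fin 2,
    1 ≤ wordEval w i 0 + wordEval w i 1 := by
  induction w with
  | nil =>
    intro i
    fin_cases i <;> simp [wordEval_nil, Matrix.one_apply]
  | cons b t ih =>
    have h0 := ih 0
    have h1 := ih 1
    intro i
    rw [wordEval_cons]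
    cases b <;> fin_cases i <;>
      simp [Matrix.mul_apply, Fin.sum_univ_two, Rm, Lm] <;> linarith

/-- The difference of row sums. -/
def dsum (M : Matrix (Fin 2) (Fin 2) ℤ) : ℤ := M 0 0 + M 0 1 - M 1 0 - M 1 1

lemma dsum_nil : dsum (wordEval []) = 0 := by
  simp [wordEval_nil, dsum, Matrix.one_apply]

lemma dsum_true (w : List Bool) : 1 ≤ dsum (wordEval (true :: w)) := by
  have h := rowsum_pos w 0
  rw [wordEval_cons]
  simp [dsum, Matrix.mul_apply, Fin.sum_univ_two, Rm]
  linarith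

lemma dsum_false (w : List Bool) : dsum (wordEval (false :: w)) ≤ -1 := by
  have h := rowsum_pos w 1
  rw [wordEval_cons]
  simp [dsum, Matrix.mul_apply, Fin.sum_univ_two, Lm]
  linarith

lemma first_letter (b₁ b₂ : Bool) (w₁ w₂ : List Bool)
    (h : wordEval (b₁ :: w₁) = wordEval (b₂ :: w₂)) : b₁ = b₂ := by
  have hd : dsum (wordEval (b₁ :: w₁)) = dsum (wordEval (b₂ :: w₂)) := by rw [h]
  cases b₁ <;> cases b₂ <;> first
    | rfl
    | (exfalso
       first
        | (have a := dsum_false w₁; have b := dsum_true w₂; linarith)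
        | (have a := dsum_true w₁; have b := dsum_false w₂; linarith))

lemma not_nil_cons (b : Bool) (w : List Bool) : wordEval (b :: w) ≠ wordEval [] := by
  intro h
  have hd : dsum (wordEval (b :: w)) = dsum (wordEval []) := by rw [h]
  rw [dsum_nil] at hd
  cases b
  · have := dsum_false w; linarith
  · have := dsum_true w; linarith

lemma cancel (b : Bool) (w₁ w₂ : List Bool)
    (h : wordEval (b :: w₁) = wordEval (b :: w₂)) : wordEval w₁ = wordEval w₂ := by
  rw [wordEval_cons, wordEval_cons] at h
  cases b
  · simp only [Bool.false_eq_true, if_false] at h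
    have hA : (!![1, 0; -1, 1] : Matrix (Fin 2) (Fin 2) ℤ) * Lm = 1 := by
      ext i j; fin_cases i <;> fin_cases j <;> simp [Lm, Matrix.mul_apply, Fin.sum_univ_two]
    rw [← one_mul (wordEval w₁), ← one_mul (wordEval w₂), ← hA, Matrix.mul_assoc, h,
      Matrix.mul_assoc]
  · simp only [if_true] at h
    have hA : (!![1, -1; 0, 1] : Matrix (Fin 2) (Fin 2) ℤ) * Rm = 1 := by
      ext i j; fin_cases i <;> fin_cases j <;> simp [Rm, Matrix.mul_apply, Fin.sum_univ_two]
    rw [← one_mul (wordEval w₁), ← one_mul (wordEval w₂), ← hA, Matrix.mul_assoc, h,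
      Matrix.mul_assoc]

/-- R and L generate a free submonoid: two words that are equal as matrices are
equal as words. -/
theorem RL_free_monoid : ∀ w₁ w₂ : List Bool, wordEval w₁ = wordEval w₂ → w₁ = w₂ := by
  intro w₁
  induction w₁ with
  | nil =>
    intro w₂ h
    cases w₂ with
    | nil => rfl
    | cons b t => exact absurd h.symm (not_nil_cons b t)
  | cons b t ih =>
    intro w₂ h
    cases w₂ with
    | nil => exact absurd h (not_nil_cons b t)
    | cons b₂ t₂ =>
      obtain rfl := first_letter b b₂ t t₂ h
      rw [ih t₂ (cancel b t t₂ h)]
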